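/- Let μ be a finite product measure on I = I₁ × Ī where Ī = I₂×…×I_d, and let f ∈ H^k_μ(I) (the Sobolev space of functions whose weak derivatives up to total order k are in L²_μ). Define J(x, x̄) = ⟨f(x,·), f(x̄,·)⟩_{L²_μ(Ī)}. Then J ∈ H^k_μ(I₁ × I₁) and its Sobolev seminorm satisfies |J|_{I₁×I₁, μ, k} ≤ ∥f∥²_{H^k_μ(I)}. -/

import Mathlib

open MeasureTheory
open scoped ENNReal NNReal

section PIPSaux

lemma PIPS.smul_prod {α β : Type*} [MeasurableSpace α] [MeasurableSpace β]
    (μ : Measure α) (ν : Measure β) [SigmaFinite μ] [SigmaFinite ν] (c : ℝ≥0∞) (hc : c ≠ ⊤) :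
    (c • μ).prod ν = c • (μ.prod ν) := by
  lift c to ℝ≥0 using hc
  have : SigmaFinite ((c : ℝ≥0∞) • μ) := by rw [← ENNReal.smul_def]; infer_instance
  refine Measure.prod_eq fun s t hs ht => ?_
  simp [Measure.prod_prod, mul_assoc]
  rw [ENNReal.smul_def, smul_eq_mul]

lemma PIPS.isom_right (x₂ : ℝ) : Isometry (fun t : ℝ => (t, x₂)) := by
  refine Isometry.of_dist_eq fun a b => ?_
  rw [Prod.dist_eq]
  simp only [dist_self]
  exact max_eq_left dist_nonneg

lemma PIPS.isom_left (x₁ : ℝ) : Isometry (fun t : ℝ => (x₁, t)) := by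
  refine Isometry.of_dist_eq fun a b => ?_
  rw [Prod.dist_eq]
  simp only [dist_self]
  exact max_eq_right dist_nonneg

lemma PIPS.integrable_fst_comp {α β Y : Type*} [MeasurableSpace α] [MeasurableSpace β]
    [MeasurableSpace Y]
    (μ₁ : Measure α) (μ₂ : Measure β) (ν : Measure Y) [IsFiniteMeasure μ₁]
    [IsFiniteMeasure μ₂] [IsFiniteMeasure ν] {g : α × Y → ℝ}
    (hg : Integrable g (μ₁.prod ν)) :
    Integrable (fun w : (α × β) × Y => g (w.1.1, w.2)) ((μ₁.prod μ₂).prod ν) := by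
  have hT : Measurable (Prod.map (Prod.fst : α × β → α) (id : Y → Y)) :=
    measurable_fst.fst.prodMk measurable_snd
  have hmap : Measure.map (Prod.map (Prod.fst : α × β → α) (id : Y → Y))
      ((μ₁.prod μ₂).prod ν) = μ₂ Set.univ • (μ₁.prod ν) := by
    rw [← Measure.map_prod_map _ _ measurable_fst measurable_id, Measure.map_fst_prod,
      Measure.map_id, PIPS.smul_prod _ _ _ (measure_ne_top _ _)]
  have h2 : Integrable g (Measure.map (Prod.map (Prod.fst : α × β → α) (id : Y → Y))
      ((μ₁.prod μ₂).prod ν)) := by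
    rw [hmap]; exact hg.smul_measure (measure_ne_top μ₂ _)
  exact (integrable_map_measure h2.aestronglyMeasurable hT.aemeasurable).mp h2

lemma PIPS.integrable_snd_comp {α β Y : Type*} [MeasurableSpace α] [MeasurableSpace β]
    [MeasurableSpace Y]
    (μ₁ : Measure α) (μ₂ : Measure β) (ν : Measure Y) [IsFiniteMeasure μ₁]
    [IsFiniteMeasure μ₂] [IsFiniteMeasure ν] {g : β × Y → ℝ}
    (hg : Integrable g (μ₂.prod ν)) :
    Integrable (fun w : (α × β) × Y => g (w.1.2, w.2)) ((μ₁.prod μ₂).prod ν) := by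
  have hT : Measurable (Prod.map (Prod.snd : α × β → β) (id : Y → Y)) :=
    measurable_fst.snd.prodMk measurable_snd
  have hmap : Measure.map (Prod.map (Prod.snd : α × β → β) (id : Y → Y))
      ((μ₁.prod μ₂).prod ν) = μ₁ Set.univ • (μ₂.prod ν) := by
    rw [← Measure.map_prod_map _ _ measurable_snd measurable_id, Measure.map_snd_prod,
      Measure.map_id, PIPS.smul_prod _ _ _ (measure_ne_top _ _)]
  have h2 : Integrable g (Measure.map (Prod.map (Prod.snd : α × β → β) (id : Y → Y))
      ((μ₁.prod μ₂).prod ν)) := by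
    rw [hmap]; exact hg.smul_measure (measure_ne_top μ₁ _)
  exact (integrable_map_measure h2.aestronglyMeasurable hT.aemeasurable).mp h2

lemma PIPS.hconv (a : ℝ) : (‖a‖₊ : ℝ≥0∞) ^ (2:ℝ) = ENNReal.ofReal (a ^ 2) := by
  rw [← enorm_eq_nnnorm, ← ofReal_norm,
    ENNReal.ofReal_rpow_of_nonneg (norm_nonneg a) (by norm_num)]
  congr 1
  have : ‖a‖ ^ (2:ℝ) = ‖a‖ ^ (2:ℕ) := by
    rw [← Real.rpow_natCast]; norm_num
  rw [this, Real.norm_eq_abs, sq_abs]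

lemma PIPS.rconv (a : ℝ) : ‖a‖ ^ (2:ℝ) = a ^ 2 := by
  have : ‖a‖ ^ (2:ℝ) = ‖a‖ ^ (2:ℕ) := by
    rw [← Real.rpow_natCast]; norm_num
  rw [this, Real.norm_eq_abs, sq_abs]

variable {Y : Type*} [MeasurableSpace Y] (μ₁ : Measure ℝ) (ν : Measure Y)
  [IsFiniteMeasure μ₁] [IsFiniteMeasure ν]

lemma PIPS.keyA {F G : ℝ × Y → ℝ} (hFm : StronglyMeasurable F) (hGm : StronglyMeasurable G)
    (hF2 : MemLp F 2 (μ₁.prod ν)) (hG2 : MemLp G 2 (μ₁.prod ν)) :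
    MemLp (fun z : ℝ × ℝ => ∫ y, F (z.1, y) * G (z.2, y) ∂ν) 2 (μ₁.prod μ₁) ∧
    eLpNorm (fun z : ℝ × ℝ => ∫ y, F (z.1, y) * G (z.2, y) ∂ν) 2 (μ₁.prod μ₁)
      ≤ eLpNorm F 2 (μ₁.prod ν) * eLpNorm G 2 (μ₁.prod ν) := by
  have h2 : ((2:ℝ≥0∞)).toReal = (2:ℝ) := by norm_num
  set Fs : ℝ → ℝ := fun x => Real.sqrt (∫ y, F (x, y) ^ 2 ∂ν) with hFs_def
  set Gs : ℝ → ℝ := fun x => Real.sqrt (∫ y, G (x, y) ^ 2 ∂ν) with hGs_def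
  have hFsq_m : StronglyMeasurable (fun p : ℝ × Y => F p ^ 2) := hFm.pow 2
  have hGsq_m : StronglyMeasurable (fun p : ℝ × Y => G p ^ 2) := hGm.pow 2
  have hFs_m : StronglyMeasurable Fs :=
    Real.continuous_sqrt.comp_stronglyMeasurable hFsq_m.integral_prod_right'
  have hGs_m : StronglyMeasurable Gs :=
    Real.continuous_sqrt.comp_stronglyMeasurable hGsq_m.integral_prod_right'
  have hFsl : ∀ᵐ x ∂μ₁, Integrable (fun y => F (x, y) ^ 2) ν :=
    hF2.integrable_sq.prod_right_ae
  have hGsl : ∀ᵐ x ∂μ₁, Integrable (fun y => G (x, y) ^ 2) ν :=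
    hG2.integrable_sq.prod_right_ae
  have hdF : eLpNorm Fs 2 μ₁ = eLpNorm F 2 (μ₁.prod ν) := by
    rw [eLpNorm_eq_lintegral_rpow_enorm_toReal two_ne_zero ENNReal.ofNat_ne_top,
        eLpNorm_eq_lintegral_rpow_enorm_toReal two_ne_zero ENNReal.ofNat_ne_top, h2]
    simp only [enorm_eq_nnnorm]
    congr 1
    have hmeas : Measurable (fun p : ℝ × Y => (‖F p‖₊ : ℝ≥0∞) ^ (2:ℝ)) :=
      (hFm.measurable.nnnorm.coe_nnreal_ennreal).pow_const _
    rw [lintegral_prod _ hmeas.aemeasurable]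
    refine lintegral_congr_ae ?_
    filter_upwards [hFsl] with x hx
    have h0 : 0 ≤ ∫ y, F (x, y) ^ 2 ∂ν := integral_nonneg fun y => sq_nonneg _
    rw [show Fs x = Real.sqrt (∫ y, F (x, y) ^ 2 ∂ν) from rfl, PIPS.hconv,
      Real.sq_sqrt h0, ofReal_integral_eq_lintegral_ofReal hx
        (Filter.Eventually.of_forall fun y => sq_nonneg _)]
    refine lintegral_congr fun y => ?_
    rw [PIPS.hconv]
  have hdG : eLpNorm Gs 2 μ₁ = eLpNorm G 2 (μ₁.prod ν) := by
    rw [eLpNorm_eq_lintegral_rpow_enorm_toReal two_ne_zero ENNReal.ofNat_ne_top,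
        eLpNorm_eq_lintegral_rpow_enorm_toReal two_ne_zero ENNReal.ofNat_ne_top, h2]
    simp only [enorm_eq_nnnorm]
    congr 1
    have hmeas : Measurable (fun p : ℝ × Y => (‖G p‖₊ : ℝ≥0∞) ^ (2:ℝ)) :=
      (hGm.measurable.nnnorm.coe_nnreal_ennreal).pow_const _
    rw [lintegral_prod _ hmeas.aemeasurable]
    refine lintegral_congr_ae ?_
    filter_upwards [hGsl] with x hx
    have h0 : 0 ≤ ∫ y, G (x, y) ^ 2 ∂ν := integral_nonneg fun y => sq_nonneg _
    rw [show Gs x = Real.sqrt (∫ y, G (x, y) ^ 2 ∂ν) from rfl, PIPS.hconv,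
      Real.sq_sqrt h0, ofReal_integral_eq_lintegral_ofReal hx
        (Filter.Eventually.of_forall fun y => sq_nonneg _)]
    refine lintegral_congr fun y => ?_
    rw [PIPS.hconv]
  have hc : eLpNorm (fun z : ℝ × ℝ => Fs z.1 * Gs z.2) 2 (μ₁.prod μ₁)
      = eLpNorm Fs 2 μ₁ * eLpNorm Gs 2 μ₁ := by
    rw [eLpNorm_eq_lintegral_rpow_enorm_toReal two_ne_zero ENNReal.ofNat_ne_top,
        eLpNorm_eq_lintegral_rpow_enorm_toReal two_ne_zero ENNReal.ofNat_ne_top,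
        eLpNorm_eq_lintegral_rpow_enorm_toReal two_ne_zero ENNReal.ofNat_ne_top, h2]
    simp only [enorm_eq_nnnorm]
    have hpt : ∀ z : ℝ × ℝ, (‖Fs z.1 * Gs z.2‖₊ : ℝ≥0∞) ^ (2:ℝ)
        = (‖Fs z.1‖₊ : ℝ≥0∞) ^ (2:ℝ) * (‖Gs z.2‖₊ : ℝ≥0∞) ^ (2:ℝ) := by
      intro z
      rw [nnnorm_mul, ENNReal.coe_mul, ENNReal.mul_rpow_of_nonneg _ _ (by norm_num)]
    rw [lintegral_congr hpt, lintegral_prod_mul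
        (hFs_m.measurable.nnnorm.coe_nnreal_ennreal.pow_const _).aemeasurable
        (hGs_m.measurable.nnnorm.coe_nnreal_ennreal.pow_const _).aemeasurable,
      ENNReal.mul_rpow_of_nonneg _ _ (by norm_num)]
  have hb : ∀ᵐ z ∂(μ₁.prod μ₁),
      ‖∫ y, F (z.1, y) * G (z.2, y) ∂ν‖ ≤ ‖Fs z.1 * Gs z.2‖ := by
    have h1 : ∀ᵐ z ∂(μ₁.prod μ₁), Integrable (fun y => F (z.1, y) ^ 2) ν :=
      Measure.quasiMeasurePreserving_fst.ae hFsl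
    have h2' : ∀ᵐ z ∂(μ₁.prod μ₁), Integrable (fun y => G (z.2, y) ^ 2) ν :=
      Measure.quasiMeasurePreserving_snd.ae hGsl
    filter_upwards [h1, h2'] with z hz1 hz2
    have hFslm : AEStronglyMeasurable (fun y => F (z.1, y)) ν :=
      (hFm.comp_measurable measurable_prodMk_left).aestronglyMeasurable
    have hGslm : AEStronglyMeasurable (fun y => G (z.2, y)) ν :=
      (hGm.comp_measurable measurable_prodMk_left).aestronglyMeasurable
    have hFsl2 : MemLp (fun y => F (z.1, y)) (ENNReal.ofReal 2) ν := by
      rw [ENNReal.ofReal_ofNat]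
      exact (memLp_two_iff_integrable_sq hFslm).mpr hz1
    have hGsl2 : MemLp (fun y => G (z.2, y)) (ENNReal.ofReal 2) ν := by
      rw [ENNReal.ofReal_ofNat]
      exact (memLp_two_iff_integrable_sq hGslm).mpr hz2
    have hcs := integral_mul_norm_le_Lp_mul_Lq (Real.holderConjugate_iff (p := 2) (q := 2) |>.mpr (by norm_num))
      hFsl2 hGsl2
    calc ‖∫ y, F (z.1, y) * G (z.2, y) ∂ν‖
        ≤ ∫ y, ‖F (z.1, y) * G (z.2, y)‖ ∂ν := norm_integral_le_integral_norm _
      _ = ∫ y, ‖F (z.1, y)‖ * ‖G (z.2, y)‖ ∂ν := by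
          simp only [norm_mul]
      _ ≤ (∫ y, ‖F (z.1, y)‖ ^ (2:ℝ) ∂ν) ^ (1/2:ℝ) * (∫ y, ‖G (z.2, y)‖ ^ (2:ℝ) ∂ν) ^ (1/2:ℝ) :=
          hcs
      _ = Fs z.1 * Gs z.2 := by
          simp only [PIPS.rconv]
          rw [show Fs z.1 = Real.sqrt (∫ y, F (z.1, y) ^ 2 ∂ν) from rfl,
            show Gs z.2 = Real.sqrt (∫ y, G (z.2, y) ^ 2 ∂ν) from rfl,
            Real.sqrt_eq_rpow, Real.sqrt_eq_rpow]
      _ ≤ ‖Fs z.1 * Gs z.2‖ := le_abs_self _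
  have hJm : StronglyMeasurable (fun z : ℝ × ℝ => ∫ y, F (z.1, y) * G (z.2, y) ∂ν) :=
    ((hFm.comp_measurable ((measurable_fst.fst).prodMk measurable_snd)).mul
      (hGm.comp_measurable ((measurable_fst.snd).prodMk measurable_snd))).integral_prod_right'
  have hmono := eLpNorm_mono_ae (p := 2) hb
  have hfin : eLpNorm (fun z : ℝ × ℝ => Fs z.1 * Gs z.2) 2 (μ₁.prod μ₁)
      = eLpNorm F 2 (μ₁.prod ν) * eLpNorm G 2 (μ₁.prod ν) := by rw [hc, hdF, hdG]
  refine ⟨⟨hJm.aestronglyMeasurable, ?_⟩, ?_⟩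
  · exact lt_of_le_of_lt (hmono.trans_eq hfin) (ENNReal.mul_lt_top hF2.2 hG2.2)
  · exact hmono.trans_eq hfin

lemma PIPS.integrable_H {F G : ℝ × Y → ℝ} (hFm : StronglyMeasurable F)
    (hGm : StronglyMeasurable G)
    (hF2 : MemLp F 2 (μ₁.prod ν)) (hG2 : MemLp G 2 (μ₁.prod ν))
    {η : ℝ × ℝ → ℝ} (hηm : StronglyMeasurable η) {C : ℝ} (hC : ∀ z, ‖η z‖ ≤ C) :
    Integrable (fun w : (ℝ × ℝ) × Y => F (w.1.1, w.2) * G (w.1.2, w.2) * η w.1)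
      ((μ₁.prod μ₁).prod ν) := by
  have hFsq : Integrable (fun w : (ℝ × ℝ) × Y => F (w.1.1, w.2) ^ 2)
      ((μ₁.prod μ₁).prod ν) :=
    PIPS.integrable_fst_comp μ₁ μ₁ ν hF2.integrable_sq
  have hGsq : Integrable (fun w : (ℝ × ℝ) × Y => G (w.1.2, w.2) ^ 2)
      ((μ₁.prod μ₁).prod ν) :=
    PIPS.integrable_snd_comp μ₁ μ₁ ν hG2.integrable_sq
  have hHm : StronglyMeasurable
      (fun w : (ℝ × ℝ) × Y => F (w.1.1, w.2) * G (w.1.2, w.2) * η w.1) := by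
    exact ((hFm.comp_measurable ((measurable_fst.fst).prodMk measurable_snd)).mul
      (hGm.comp_measurable ((measurable_fst.snd).prodMk measurable_snd))).mul
      (hηm.comp_measurable (measurable_fst : Measurable fun w : (ℝ × ℝ) × Y => w.1))
  have hC0 : 0 ≤ C := le_trans (norm_nonneg _) (hC (0, 0))
  refine Integrable.mono' (((hFsq.add hGsq).const_mul (C / 2))) hHm.aestronglyMeasurable ?_
  refine Filter.Eventually.of_forall fun w => ?_
  have h1 : ‖F (w.1.1, w.2) * G (w.1.2, w.2) * η w.1‖
      ≤ ‖F (w.1.1, w.2)‖ * ‖G (w.1.2, w.2)‖ * C := by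
    rw [norm_mul, norm_mul]
    exact mul_le_mul_of_nonneg_left (hC w.1) (by positivity)
  refine h1.trans ?_
  have h2 : ‖F (w.1.1, w.2)‖ * ‖G (w.1.2, w.2)‖
      ≤ (F (w.1.1, w.2) ^ 2 + G (w.1.2, w.2) ^ 2) / 2 := by
    rw [Real.norm_eq_abs, Real.norm_eq_abs]
    nlinarith [sq_nonneg (|F (w.1.1, w.2)| - |G (w.1.2, w.2)|), sq_abs (F (w.1.1, w.2)),
      sq_abs (G (w.1.2, w.2))]
  calc ‖F (w.1.1, w.2)‖ * ‖G (w.1.2, w.2)‖ * C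
      ≤ (F (w.1.1, w.2) ^ 2 + G (w.1.2, w.2) ^ 2) / 2 * C :=
        mul_le_mul_of_nonneg_right h2 hC0
    _ = C / 2 * (F (w.1.1, w.2) ^ 2 + G (w.1.2, w.2) ^ 2) := by ring

lemma PIPS.keyC {F G : ℝ × Y → ℝ} (hFm : StronglyMeasurable F)
    (hGm : StronglyMeasurable G)
    (hF2 : MemLp F 2 (μ₁.prod ν)) (hG2 : MemLp G 2 (μ₁.prod ν))
    {η : ℝ × ℝ → ℝ} (hηm : StronglyMeasurable η) {C : ℝ} (hC : ∀ z, ‖η z‖ ≤ C) :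
    ∫ z : ℝ × ℝ, (∫ y, F (z.1, y) * G (z.2, y) ∂ν) * η z ∂(μ₁.prod μ₁)
      = ∫ y, ∫ x₂, G (x₂, y) * ∫ x₁, F (x₁, y) * η (x₁, x₂) ∂μ₁ ∂μ₁ ∂ν := by
  have hH := PIPS.integrable_H μ₁ ν hFm hGm hF2 hG2 hηm hC
  have step1 : ∫ z : ℝ × ℝ, (∫ y, F (z.1, y) * G (z.2, y) ∂ν) * η z ∂(μ₁.prod μ₁)
      = ∫ z : ℝ × ℝ, ∫ y, F (z.1, y) * G (z.2, y) * η z ∂ν ∂(μ₁.prod μ₁) := by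
    refine integral_congr_ae (Filter.Eventually.of_forall fun z => ?_)
    show (∫ y, F (z.1, y) * G (z.2, y) ∂ν) * η z = ∫ y, F (z.1, y) * G (z.2, y) * η z ∂ν
    rw [← integral_mul_const]
  rw [step1, integral_integral_swap hH]
  refine integral_congr_ae ?_
  filter_upwards [hH.prod_left_ae] with y hy
  have step3 : ∫ z : ℝ × ℝ, F (z.1, y) * G (z.2, y) * η z ∂(μ₁.prod μ₁)
      = ∫ x₂, ∫ x₁, F (x₁, y) * G (x₂, y) * η (x₁, x₂) ∂μ₁ ∂μ₁ :=
    integral_prod_symm _ hy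
  rw [step3]
  refine integral_congr_ae (Filter.Eventually.of_forall fun x₂ => ?_)
  have h : ∀ x₁, F (x₁, y) * G (x₂, y) * η (x₁, x₂)
      = G (x₂, y) * (F (x₁, y) * η (x₁, x₂)) := fun x₁ => by ring
  show ∫ x₁, F (x₁, y) * G (x₂, y) * η (x₁, x₂) ∂μ₁
      = G (x₂, y) * ∫ x₁, F (x₁, y) * η (x₁, x₂) ∂μ₁
  simp only [h]
  rw [integral_const_mul]

lemma PIPS.keyC' {F G : ℝ × Y → ℝ} (hFm : StronglyMeasurable F)
    (hGm : StronglyMeasurable G)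
    (hF2 : MemLp F 2 (μ₁.prod ν)) (hG2 : MemLp G 2 (μ₁.prod ν))
    {η : ℝ × ℝ → ℝ} (hηm : StronglyMeasurable η) {C : ℝ} (hC : ∀ z, ‖η z‖ ≤ C) :
    ∫ z : ℝ × ℝ, (∫ y, F (z.1, y) * G (z.2, y) ∂ν) * η z ∂(μ₁.prod μ₁)
      = ∫ y, ∫ x₁, F (x₁, y) * ∫ x₂, G (x₂, y) * η (x₁, x₂) ∂μ₁ ∂μ₁ ∂ν := by
  have hH := PIPS.integrable_H μ₁ ν hFm hGm hF2 hG2 hηm hC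
  have step1 : ∫ z : ℝ × ℝ, (∫ y, F (z.1, y) * G (z.2, y) ∂ν) * η z ∂(μ₁.prod μ₁)
      = ∫ z : ℝ × ℝ, ∫ y, F (z.1, y) * G (z.2, y) * η z ∂ν ∂(μ₁.prod μ₁) := by
    refine integral_congr_ae (Filter.Eventually.of_forall fun z => ?_)
    show (∫ y, F (z.1, y) * G (z.2, y) ∂ν) * η z = ∫ y, F (z.1, y) * G (z.2, y) * η z ∂ν
    rw [← integral_mul_const]
  rw [step1, integral_integral_swap hH]
  refine integral_congr_ae ?_
  filter_upwards [hH.prod_left_ae] with y hy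
  have step3 : ∫ z : ℝ × ℝ, F (z.1, y) * G (z.2, y) * η z ∂(μ₁.prod μ₁)
      = ∫ x₁, ∫ x₂, F (x₁, y) * G (x₂, y) * η (x₁, x₂) ∂μ₁ ∂μ₁ :=
    integral_prod _ hy
  rw [step3]
  refine integral_congr_ae (Filter.Eventually.of_forall fun x₁ => ?_)
  have h : ∀ x₂, F (x₁, y) * G (x₂, y) * η (x₁, x₂)
      = F (x₁, y) * (G (x₂, y) * η (x₁, x₂)) := fun x₂ => by ring
  show ∫ x₂, F (x₁, y) * G (x₂, y) * η (x₁, x₂) ∂μ₁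
      = F (x₁, y) * ∫ x₂, G (x₂, y) * η (x₁, x₂) ∂μ₁
  simp only [h]
  rw [integral_const_mul]

end PIPSaux

set_option maxHeartbeats 1000000

/-- Sobolev regularity of the partial inner product kernel: if `f ∈ H^k_μ(I₁ × Ī)`
(its weak derivatives `D^i f` in the first variable, here given as the family `Df`,
are square integrable and satisfy the integration-by-parts identity), then
`J(x, x̄) = ⟨f(x,·), f(x̄,·)⟩` belongs to `H^k_μ(I₁ × I₁)` — its candidate weak
derivatives `⟨D^{i₁}f(x,·), D^{i₂}f(x̄,·)⟩` are square integrable and satisfy the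
weak-derivative identities in each coordinate — and the order-`k` Sobolev seminorm of
`J` is bounded by the square of the Sobolev norm of `f`. -/
theorem partial_inner_product_sobolev
    {Y : Type*} [MeasurableSpace Y] (μ₁ : Measure ℝ) (ν : Measure Y)
    [IsFiniteMeasure μ₁] [IsFiniteMeasure ν] (k : ℕ)
    (Df : ℕ → ℝ → Y → ℝ)
    (hweak : ∀ i < k, ∀ᵐ y ∂ν, ∀ φ : ℝ → ℝ, ContDiff ℝ (⊤ : ℕ∞) φ → HasCompactSupport φ →
      ∫ x, Df i x y * deriv φ x ∂μ₁ = -∫ x, Df (i + 1) x y * φ x ∂μ₁)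
    (hL2 : ∀ i ≤ k, MemLp (fun p : ℝ × Y => Df i p.1 p.2) 2 (μ₁.prod ν)) :
    (∀ i : ℕ × ℕ, i.1 + i.2 ≤ k →
      MemLp (fun z : ℝ × ℝ => ∫ y, Df i.1 z.1 y * Df i.2 z.2 y ∂ν) 2 (μ₁.prod μ₁)) ∧
    (∀ i : ℕ × ℕ, i.1 + 1 + i.2 ≤ k → ∀ φ : ℝ × ℝ → ℝ,
      ContDiff ℝ (⊤ : ℕ∞) φ → HasCompactSupport φ →
      ∫ z : ℝ × ℝ, (∫ y, Df i.1 z.1 y * Df i.2 z.2 y ∂ν) * fderiv ℝ φ z (1, 0)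
          ∂(μ₁.prod μ₁)
        = -∫ z : ℝ × ℝ, (∫ y, Df (i.1 + 1) z.1 y * Df i.2 z.2 y ∂ν) * φ z
            ∂(μ₁.prod μ₁)) ∧
    (∀ i : ℕ × ℕ, i.1 + (i.2 + 1) ≤ k → ∀ φ : ℝ × ℝ → ℝ,
      ContDiff ℝ (⊤ : ℕ∞) φ → HasCompactSupport φ →
      ∫ z : ℝ × ℝ, (∫ y, Df i.1 z.1 y * Df i.2 z.2 y ∂ν) * fderiv ℝ φ z (0, 1)
          ∂(μ₁.prod μ₁)
        = -∫ z : ℝ × ℝ, (∫ y, Df i.1 z.1 y * Df (i.2 + 1) z.2 y ∂ν) * φ z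
            ∂(μ₁.prod μ₁)) ∧
    ∑ i ∈ Finset.HasAntidiagonal.antidiagonal k,
        (eLpNorm (fun z : ℝ × ℝ => ∫ y, Df i.1 z.1 y * Df i.2 z.2 y ∂ν) 2
          (μ₁.prod μ₁)).toReal ^ 2
      ≤ (∑ i ∈ Finset.range (k + 1),
          (eLpNorm (fun p : ℝ × Y => Df i p.1 p.2) 2 (μ₁.prod ν)).toReal ^ 2) ^ 2 := by
  classical
  set f : ℕ → ℝ × Y → ℝ := fun i => if h : i ≤ k then ((hL2 i h).1.mk _) else 0 with hf_def
  have hfm : ∀ i, StronglyMeasurable (f i) := by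
    intro i
    rw [hf_def]
    dsimp only
    split
    · exact (hL2 i ‹_›).1.stronglyMeasurable_mk
    · exact stronglyMeasurable_const
  have hfe : ∀ i, i ≤ k → (fun p : ℝ × Y => Df i p.1 p.2) =ᵐ[μ₁.prod ν] f i := by
    intro i hi
    rw [hf_def]
    dsimp only
    rw [dif_pos hi]
    exact (hL2 i hi).1.ae_eq_mk
  have hf2 : ∀ i, i ≤ k → MemLp (f i) 2 (μ₁.prod ν) := fun i hi =>
    (hL2 i hi).ae_eq (hfe i hi)
  have hslice : ∀ i j, i ≤ k → j ≤ k → ∀ᵐ z : ℝ × ℝ ∂(μ₁.prod μ₁),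
      (∫ y, Df i z.1 y * Df j z.2 y ∂ν) = ∫ y, f i (z.1, y) * f j (z.2, y) ∂ν := by
    intro i j hi hj
    have h1 : ∀ᵐ x ∂μ₁, ∀ᵐ y ∂ν, Df i x y = f i (x, y) :=
      Measure.ae_ae_of_ae_prod (hfe i hi)
    have h2 : ∀ᵐ x ∂μ₁, ∀ᵐ y ∂ν, Df j x y = f j (x, y) :=
      Measure.ae_ae_of_ae_prod (hfe j hj)
    have h1' : ∀ᵐ z : ℝ × ℝ ∂(μ₁.prod μ₁), ∀ᵐ y ∂ν, Df i z.1 y = f i (z.1, y) :=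
      Measure.quasiMeasurePreserving_fst.ae h1
    have h2' : ∀ᵐ z : ℝ × ℝ ∂(μ₁.prod μ₁), ∀ᵐ y ∂ν, Df j z.2 y = f j (z.2, y) :=
      Measure.quasiMeasurePreserving_snd.ae h2
    filter_upwards [h1', h2'] with z hz1 hz2
    refine integral_congr_ae ?_
    filter_upwards [hz1, hz2] with y hy1 hy2
    rw [hy1, hy2]
  -- swapped-order a.e. equality: for a.e. y, the slices agree
  have hswap : ∀ i, i ≤ k → ∀ᵐ y ∂ν, ∀ᵐ x ∂μ₁, Df i x y = f i (x, y) := by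
    intro i hi
    have hsw : MeasurePreserving Prod.swap (ν.prod μ₁) (μ₁.prod ν) :=
      Measure.measurePreserving_swap
    have h := hsw.quasiMeasurePreserving.ae (hfe i hi)
    exact Measure.ae_ae_of_ae_prod h
  have part1 : ∀ i : ℕ × ℕ, i.1 + i.2 ≤ k →
      MemLp (fun z : ℝ × ℝ => ∫ y, Df i.1 z.1 y * Df i.2 z.2 y ∂ν) 2 (μ₁.prod μ₁) := by
    intro i hi
    have hi1 : i.1 ≤ k := le_trans (Nat.le_add_right _ _) hi
    have hi2 : i.2 ≤ k := le_trans (Nat.le_add_left _ _) hi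
    have hEE : (fun z : ℝ × ℝ => ∫ y, Df i.1 z.1 y * Df i.2 z.2 y ∂ν)
        =ᵐ[μ₁.prod μ₁] fun z : ℝ × ℝ => ∫ y, f i.1 (z.1, y) * f i.2 (z.2, y) ∂ν :=
      hslice i.1 i.2 hi1 hi2
    exact ((PIPS.keyA μ₁ ν (hfm i.1) (hfm i.2) (hf2 i.1 hi1) (hf2 i.2 hi2)).1).ae_eq hEE.symm
  refine ⟨part1, ?_, ?_, ?_⟩
  · -- weak derivative in the first coordinate
    intro i hi φ hφ hφs
    have hi1 : i.1 ≤ k := by omega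
    have hi1' : i.1 + 1 ≤ k := by omega
    have hi2 : i.2 ≤ k := by omega
    set ψ : ℝ × ℝ → ℝ := fun z => fderiv ℝ φ z (1, 0) with hψ_def
    have hψc : Continuous ψ := (hφ.continuous_fderiv (by simp)).clm_apply continuous_const
    have hψs : HasCompactSupport ψ := hφs.fderiv_apply ℝ (1, 0)
    obtain ⟨Cψ, hCψ⟩ := hψc.bounded_above_of_compact_support hψs
    obtain ⟨Cφ, hCφ⟩ := hφ.continuous.bounded_above_of_compact_support hφs
    have hL : ∫ z : ℝ × ℝ, (∫ y, Df i.1 z.1 y * Df i.2 z.2 y ∂ν) * ψ z ∂(μ₁.prod μ₁)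
        = ∫ z : ℝ × ℝ, (∫ y, f i.1 (z.1, y) * f i.2 (z.2, y) ∂ν) * ψ z ∂(μ₁.prod μ₁) := by
      refine integral_congr_ae ?_
      filter_upwards [hslice i.1 i.2 hi1 hi2] with z hz
      rw [hz]
    have hR : ∫ z : ℝ × ℝ, (∫ y, Df (i.1 + 1) z.1 y * Df i.2 z.2 y ∂ν) * φ z ∂(μ₁.prod μ₁)
        = ∫ z : ℝ × ℝ, (∫ y, f (i.1 + 1) (z.1, y) * f i.2 (z.2, y) ∂ν) * φ z ∂(μ₁.prod μ₁) := by
      refine integral_congr_ae ?_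
      filter_upwards [hslice (i.1 + 1) i.2 hi1' hi2] with z hz
      rw [hz]
    have key_ae : ∀ᵐ y ∂ν, ∀ x₂ : ℝ,
        ∫ x₁, f i.1 (x₁, y) * ψ (x₁, x₂) ∂μ₁
          = -∫ x₁, f (i.1 + 1) (x₁, y) * φ (x₁, x₂) ∂μ₁ := by
      have hw := hweak i.1 (by omega)
      filter_upwards [hw, hswap i.1 hi1, hswap (i.1 + 1) hi1'] with y hwy h1y h2y
      intro x₂
      set χ : ℝ → ℝ := fun t => φ (t, x₂) with hχ_def
      have hχ : ContDiff ℝ (⊤ : ℕ∞) χ := hφ.comp (contDiff_id.prodMk contDiff_const)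
      have hχs : HasCompactSupport χ :=
        hφs.comp_isClosedEmbedding (PIPS.isom_right x₂).isClosedEmbedding
      have hder : ∀ t : ℝ, deriv χ t = ψ (t, x₂) := by
        intro t
        have hd : HasDerivAt χ (fderiv ℝ φ (t, x₂) (1, 0)) t :=
          ((hφ.differentiable (by simp)).differentiableAt.hasFDerivAt).comp_hasDerivAt t
            ((hasDerivAt_id t).prodMk (hasDerivAt_const t x₂))
        exact hd.deriv
      calc ∫ x₁, f i.1 (x₁, y) * ψ (x₁, x₂) ∂μ₁
          = ∫ x₁, Df i.1 x₁ y * deriv χ x₁ ∂μ₁ := by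
            refine integral_congr_ae ?_
            filter_upwards [h1y] with x hx
            rw [hx, hder]
        _ = -∫ x₁, Df (i.1 + 1) x₁ y * χ x₁ ∂μ₁ := hwy χ hχ hχs
        _ = -∫ x₁, f (i.1 + 1) (x₁, y) * φ (x₁, x₂) ∂μ₁ := by
            congr 1
            refine integral_congr_ae ?_
            filter_upwards [h2y] with x hx
            rw [hx]
    show ∫ z : ℝ × ℝ, (∫ y, Df i.1 z.1 y * Df i.2 z.2 y ∂ν) * ψ z ∂(μ₁.prod μ₁)
        = -∫ z : ℝ × ℝ, (∫ y, Df (i.1 + 1) z.1 y * Df i.2 z.2 y ∂ν) * φ z ∂(μ₁.prod μ₁)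
    rw [hL, hR,
      PIPS.keyC μ₁ ν (hfm i.1) (hfm i.2) (hf2 _ hi1) (hf2 _ hi2)
        hψc.stronglyMeasurable hCψ,
      PIPS.keyC μ₁ ν (hfm (i.1 + 1)) (hfm i.2) (hf2 _ hi1') (hf2 _ hi2)
        hφ.continuous.stronglyMeasurable hCφ,
      ← integral_neg]
    refine integral_congr_ae ?_
    filter_upwards [key_ae] with y hy
    rw [← integral_neg]
    refine integral_congr_ae (Filter.Eventually.of_forall fun x₂ => ?_)
    show f i.2 (x₂, y) * ∫ x₁, f i.1 (x₁, y) * ψ (x₁, x₂) ∂μ₁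
        = -(f i.2 (x₂, y) * ∫ x₁, f (i.1 + 1) (x₁, y) * φ (x₁, x₂) ∂μ₁)
    rw [hy x₂]
    ring
  · -- weak derivative in the second coordinate
    intro i hi φ hφ hφs
    have hi1 : i.1 ≤ k := by omega
    have hi2 : i.2 ≤ k := by omega
    have hi2' : i.2 + 1 ≤ k := by omega
    set ψ : ℝ × ℝ → ℝ := fun z => fderiv ℝ φ z (0, 1) with hψ_def
    have hψc : Continuous ψ := (hφ.continuous_fderiv (by simp)).clm_apply continuous_const
    have hψs : HasCompactSupport ψ := hφs.fderiv_apply ℝ (0, 1)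
    obtain ⟨Cψ, hCψ⟩ := hψc.bounded_above_of_compact_support hψs
    obtain ⟨Cφ, hCφ⟩ := hφ.continuous.bounded_above_of_compact_support hφs
    have hL : ∫ z : ℝ × ℝ, (∫ y, Df i.1 z.1 y * Df i.2 z.2 y ∂ν) * ψ z ∂(μ₁.prod μ₁)
        = ∫ z : ℝ × ℝ, (∫ y, f i.1 (z.1, y) * f i.2 (z.2, y) ∂ν) * ψ z ∂(μ₁.prod μ₁) := by
      refine integral_congr_ae ?_
      filter_upwards [hslice i.1 i.2 hi1 hi2] with z hz
      rw [hz]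
    have hR : ∫ z : ℝ × ℝ, (∫ y, Df i.1 z.1 y * Df (i.2 + 1) z.2 y ∂ν) * φ z ∂(μ₁.prod μ₁)
        = ∫ z : ℝ × ℝ, (∫ y, f i.1 (z.1, y) * f (i.2 + 1) (z.2, y) ∂ν) * φ z ∂(μ₁.prod μ₁) := by
      refine integral_congr_ae ?_
      filter_upwards [hslice i.1 (i.2 + 1) hi1 hi2'] with z hz
      rw [hz]
    have key_ae : ∀ᵐ y ∂ν, ∀ x₁ : ℝ,
        ∫ x₂, f i.2 (x₂, y) * ψ (x₁, x₂) ∂μ₁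
          = -∫ x₂, f (i.2 + 1) (x₂, y) * φ (x₁, x₂) ∂μ₁ := by
      have hw := hweak i.2 (by omega)
      filter_upwards [hw, hswap i.2 hi2, hswap (i.2 + 1) hi2'] with y hwy h1y h2y
      intro x₁
      set χ : ℝ → ℝ := fun t => φ (x₁, t) with hχ_def
      have hχ : ContDiff ℝ (⊤ : ℕ∞) χ := hφ.comp (contDiff_const.prodMk contDiff_id)
      have hχs : HasCompactSupport χ :=
        hφs.comp_isClosedEmbedding (PIPS.isom_left x₁).isClosedEmbedding
      have hder : ∀ t : ℝ, deriv χ t = ψ (x₁, t) := by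
        intro t
        have hd : HasDerivAt χ (fderiv ℝ φ (x₁, t) (0, 1)) t :=
          ((hφ.differentiable (by simp)).differentiableAt.hasFDerivAt).comp_hasDerivAt t
            ((hasDerivAt_const t x₁).prodMk (hasDerivAt_id t))
        exact hd.deriv
      calc ∫ x₂, f i.2 (x₂, y) * ψ (x₁, x₂) ∂μ₁
          = ∫ x₂, Df i.2 x₂ y * deriv χ x₂ ∂μ₁ := by
            refine integral_congr_ae ?_
            filter_upwards [h1y] with x hx
            rw [hx, hder]
        _ = -∫ x₂, Df (i.2 + 1) x₂ y * χ x₂ ∂μ₁ := hwy χ hχ hχs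
        _ = -∫ x₂, f (i.2 + 1) (x₂, y) * φ (x₁, x₂) ∂μ₁ := by
            congr 1
            refine integral_congr_ae ?_
            filter_upwards [h2y] with x hx
            rw [hx]
    show ∫ z : ℝ × ℝ, (∫ y, Df i.1 z.1 y * Df i.2 z.2 y ∂ν) * ψ z ∂(μ₁.prod μ₁)
        = -∫ z : ℝ × ℝ, (∫ y, Df i.1 z.1 y * Df (i.2 + 1) z.2 y ∂ν) * φ z ∂(μ₁.prod μ₁)
    rw [hL, hR,
      PIPS.keyC' μ₁ ν (hfm i.1) (hfm i.2) (hf2 _ hi1) (hf2 _ hi2)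
        hψc.stronglyMeasurable hCψ,
      PIPS.keyC' μ₁ ν (hfm i.1) (hfm (i.2 + 1)) (hf2 _ hi1) (hf2 _ hi2')
        hφ.continuous.stronglyMeasurable hCφ,
      ← integral_neg]
    refine integral_congr_ae ?_
    filter_upwards [key_ae] with y hy
    rw [← integral_neg]
    refine integral_congr_ae (Filter.Eventually.of_forall fun x₁ => ?_)
    show f i.1 (x₁, y) * ∫ x₂, f i.2 (x₂, y) * ψ (x₁, x₂) ∂μ₁
        = -(f i.1 (x₁, y) * ∫ x₂, f (i.2 + 1) (x₂, y) * φ (x₁, x₂) ∂μ₁)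
    rw [hy x₁]
    ring
  · -- the seminorm bound
    set a : ℕ → ℝ := fun i =>
      (eLpNorm (fun p : ℝ × Y => Df i p.1 p.2) 2 (μ₁.prod ν)).toReal with ha_def
    have hbound : ∀ i : ℕ × ℕ, i.1 ≤ k → i.2 ≤ k →
        (eLpNorm (fun z : ℝ × ℝ => ∫ y, Df i.1 z.1 y * Df i.2 z.2 y ∂ν) 2
          (μ₁.prod μ₁)).toReal ^ 2 ≤ a i.1 ^ 2 * a i.2 ^ 2 := by
      intro i hi1 hi2
      have h1 : eLpNorm (fun z : ℝ × ℝ => ∫ y, Df i.1 z.1 y * Df i.2 z.2 y ∂ν) 2 (μ₁.prod μ₁)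
          = eLpNorm (fun z : ℝ × ℝ => ∫ y, f i.1 (z.1, y) * f i.2 (z.2, y) ∂ν) 2 (μ₁.prod μ₁) :=
        eLpNorm_congr_ae (hslice i.1 i.2 hi1 hi2)
      have h2 := (PIPS.keyA μ₁ ν (hfm i.1) (hfm i.2) (hf2 i.1 hi1) (hf2 i.2 hi2)).2
      have h3 : eLpNorm (f i.1) 2 (μ₁.prod ν)
          = eLpNorm (fun p : ℝ × Y => Df i.1 p.1 p.2) 2 (μ₁.prod ν) :=
        eLpNorm_congr_ae (hfe i.1 hi1).symm
      have h4 : eLpNorm (f i.2) 2 (μ₁.prod ν)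
          = eLpNorm (fun p : ℝ × Y => Df i.2 p.1 p.2) 2 (μ₁.prod ν) :=
        eLpNorm_congr_ae (hfe i.2 hi2).symm
      have h5 : eLpNorm (fun z : ℝ × ℝ => ∫ y, Df i.1 z.1 y * Df i.2 z.2 y ∂ν) 2 (μ₁.prod μ₁)
          ≤ eLpNorm (fun p : ℝ × Y => Df i.1 p.1 p.2) 2 (μ₁.prod ν)
            * eLpNorm (fun p : ℝ × Y => Df i.2 p.1 p.2) 2 (μ₁.prod ν) := by
        rw [h1, ← h3, ← h4]; exact h2
      have hfin : eLpNorm (fun p : ℝ × Y => Df i.1 p.1 p.2) 2 (μ₁.prod ν)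
          * eLpNorm (fun p : ℝ × Y => Df i.2 p.1 p.2) 2 (μ₁.prod ν) ≠ ⊤ :=
        ENNReal.mul_ne_top (hL2 i.1 hi1).2.ne (hL2 i.2 hi2).2.ne
      have h6 := ENNReal.toReal_mono hfin h5
      rw [ENNReal.toReal_mul] at h6
      have h7 := pow_le_pow_left₀ ENNReal.toReal_nonneg h6 2
      rwa [mul_pow] at h7
    have hsub : Finset.HasAntidiagonal.antidiagonal k ⊆ Finset.range (k + 1) ×ˢ Finset.range (k + 1) := by
      intro p hp
      rw [Finset.HasAntidiagonal.mem_antidiagonal] at hp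
      simp only [Finset.mem_product, Finset.mem_range]
      omega
    calc ∑ i ∈ Finset.HasAntidiagonal.antidiagonal k,
          (eLpNorm (fun z : ℝ × ℝ => ∫ y, Df i.1 z.1 y * Df i.2 z.2 y ∂ν) 2
            (μ₁.prod μ₁)).toReal ^ 2
        ≤ ∑ i ∈ Finset.HasAntidiagonal.antidiagonal k, a i.1 ^ 2 * a i.2 ^ 2 := by
          refine Finset.sum_le_sum fun i hi => ?_
          rw [Finset.HasAntidiagonal.mem_antidiagonal] at hi
          exact hbound i (by omega) (by omega)
      _ ≤ ∑ i ∈ Finset.range (k + 1) ×ˢ Finset.range (k + 1), a i.1 ^ 2 * a i.2 ^ 2 :=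
          Finset.sum_le_sum_of_subset_of_nonneg hsub (fun i _ _ => by positivity)
      _ = (∑ i ∈ Finset.range (k + 1), a i ^ 2) ^ 2 := by
          rw [Finset.sum_product, sq (∑ i ∈ Finset.range (k + 1), a i ^ 2),
            Finset.sum_mul_sum]
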